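/- Let Γ be the presented group with generators g, h, f and relations h g h⁻¹ = g⁻¹, h f h⁻¹ = f⁻¹, and g f = f g. Then the subgroup of Γ generated by the set {g, h², f} is isomorphic to ℤ × ℤ × ℤ (the free abelian group of rank 3). -/

import Mathlib

/-- The relator set of the presented group
`Γ = ⟨g, h, f | h g h⁻¹ = g⁻¹, h f h⁻¹ = f⁻¹, g f = f g⟩`,
the fundamental group of the spherical tangent bundle of the Klein bottle.
Generator `0` is `g`, generator `1` is `h`, generator `2` is `f`. -/
def kleinSTRels : Set (FreeGroup (Fin 3)) :=
  { FreeGroup.of 1 * FreeGroup.of 0 * (FreeGroup.of 1)⁻¹ * FreeGroup.of 0,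
    FreeGroup.of 1 * FreeGroup.of 2 * (FreeGroup.of 1)⁻¹ * FreeGroup.of 2,
    FreeGroup.of 0 * FreeGroup.of 2 * (FreeGroup.of 0)⁻¹ * (FreeGroup.of 2)⁻¹ }

/-- The presented group `⟨g, h, f | h g h⁻¹ = g⁻¹, h f h⁻¹ = f⁻¹, g f = f g⟩`. -/
abbrev KleinST : Type := PresentedGroup kleinSTRels

def KleinST.g : KleinST := PresentedGroup.of 0
def KleinST.h : KleinST := PresentedGroup.of 1
def KleinST.f : KleinST := PresentedGroup.of 2

/-!
Since `h` conjugates `g` and `f` to their inverses, `h²` commutes with both, so `g`, `h²`, `f`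
pairwise commute and `(a, b, c) ↦ g ^ a * h ^ (2 * b) * f ^ c` is a homomorphism from `ℤ³` onto
the subgroup. It is injective because `Γ` maps to `ℤ² ⋊ ℤ` (with `ℤ` acting by inversion) via
`g ↦ (1, 0)`, `f ↦ (0, 1)` and `h` to the generator of `ℤ`: the `ℤ`-coordinate of the image is
`2 * b`, and once `b = 0` the `ℤ²`-coordinate is `(a, c)`.
-/
open Multiplicative SemidirectProduct

section Group

variable {G : Type*} [Group G] {x y z : G}

theorem commute_sq_of_mul_mul_inv_eq_inv (h : y * x * y⁻¹ = x⁻¹) : Commute x (y ^ 2) := by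
  have hconj : y ^ 2 * x * (y ^ 2)⁻¹ = x :=
    calc y ^ 2 * x * (y ^ 2)⁻¹ = y * (y * x * y⁻¹) * y⁻¹ := by
          simp only [sq, mul_inv_rev, mul_assoc]
      _ = y * x⁻¹ * y⁻¹ := by rw [h]
      _ = (y * x * y⁻¹)⁻¹ := by simp only [mul_inv_rev, inv_inv, mul_assoc]
      _ = x := by rw [h, inv_inv]
  exact (mul_inv_eq_iff_eq_mul.mp hconj).symm

def zpowersHom₃ (hxy : Commute x y) (hxz : Commute x z) (hyz : Commute y z) :
    Multiplicative (ℤ × ℤ × ℤ) →* G :=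
  ((zpowersHom G x).noncommCoprod
      (((zpowersHom G y).noncommCoprod (zpowersHom G z) fun _ _ => hyz.zpow_zpow _ _).comp
        (MulEquiv.prodMultiplicative ℤ ℤ).toMonoidHom)
      fun _ _ => (hxy.zpow_zpow _ _).mul_right (hxz.zpow_zpow _ _)).comp
    (MulEquiv.prodMultiplicative ℤ (ℤ × ℤ)).toMonoidHom

variable (hxy : Commute x y) (hxz : Commute x z) (hyz : Commute y z)

@[simp]
theorem zpowersHom₃_apply (a b c : ℤ) :
    zpowersHom₃ hxy hxz hyz (ofAdd (a, b, c)) = x ^ a * (y ^ b * z ^ c) :=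
  rfl

open Subgroup in
theorem range_zpowersHom₃ : (zpowersHom₃ hxy hxz hyz).range = Subgroup.closure {x, y, z} := by
  apply le_antisymm
  · rintro _ ⟨p, rfl⟩
    obtain ⟨⟨a, b, c⟩, rfl⟩ := ofAdd.surjective p
    rw [zpowersHom₃_apply]
    exact mul_mem (zpow_mem (subset_closure (by simp)) _)
      (mul_mem (zpow_mem (subset_closure (by simp)) _) (zpow_mem (subset_closure (by simp)) _))
  · rw [closure_le]
    rintro _ (rfl | rfl | rfl)
    · exact ⟨ofAdd (1, 0, 0), by simp⟩
    · exact ⟨ofAdd (0, 1, 0), by simp⟩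
    · exact ⟨ofAdd (0, 0, 1), by simp⟩

end Group

section SemidirectInv

variable (N : Type*) [CommGroup N]

def invAction : Multiplicative ℤ →* MulAut N := zpowersHom _ (MulEquiv.inv N)

variable {N}

theorem inr_ofAdd_one_conj_inl (n : N) :
    (inr (ofAdd 1) * inl n * (inr (ofAdd 1))⁻¹ : N ⋊[invAction N] Multiplicative ℤ) =
      (inl n)⁻¹ := by
  rw [← map_inv inr, ← inl_aut, ← map_inv]
  simp [invAction]

end SemidirectInv

namespace KleinST

theorem h_mul_g_mul_h_inv : h * g * h⁻¹ = g⁻¹ :=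
  mul_eq_one_iff_eq_inv.mp (PresentedGroup.one_of_mem (Or.inl rfl))

theorem h_mul_f_mul_h_inv : h * f * h⁻¹ = f⁻¹ :=
  mul_eq_one_iff_eq_inv.mp (PresentedGroup.one_of_mem (Or.inr (Or.inl rfl)))

theorem commute_g_f : Commute g f :=
  mul_inv_eq_iff_eq_mul.mp (mul_inv_eq_one.mp (PresentedGroup.one_of_mem (Or.inr (Or.inr rfl))))

theorem commute_g_h_sq : Commute g (h ^ 2) :=
  commute_sq_of_mul_mul_inv_eq_inv h_mul_g_mul_h_inv

theorem commute_h_sq_f : Commute (h ^ 2) f :=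
  (commute_sq_of_mul_mul_inv_eq_inv h_mul_f_mul_h_inv).symm

section lift

variable {G : Type*} [Group G] {x y z : G}

def lift (hx : y * x * y⁻¹ = x⁻¹) (hz : y * z * y⁻¹ = z⁻¹) (hxz : Commute x z) : KleinST →* G :=
  PresentedGroup.toGroup (f := ![x, y, z]) <| by
    rintro r (rfl | rfl | rfl) <;> simp [hx, hz, hxz.eq]

variable (hx : y * x * y⁻¹ = x⁻¹) (hz : y * z * y⁻¹ = z⁻¹) (hxz : Commute x z)

@[simp] theorem lift_g : lift hx hz hxz g = x := PresentedGroup.toGroup.of _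
@[simp] theorem lift_h : lift hx hz hxz h = y := PresentedGroup.toGroup.of _
@[simp] theorem lift_f : lift hx hz hxz f = z := PresentedGroup.toGroup.of _

end lift

def toSemidirect : KleinST →* Multiplicative (ℤ × ℤ) ⋊[invAction _] Multiplicative ℤ :=
  lift (inr_ofAdd_one_conj_inl (ofAdd (1, 0))) (inr_ofAdd_one_conj_inl (ofAdd (0, 1)))
    ((Commute.all _ _).map inl)

theorem injective_zpowersHom₃ :
    Function.Injective (zpowersHom₃ commute_g_h_sq commute_g_f commute_h_sq_f) := by
  rw [injective_iff_map_eq_one]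
  intro p hp
  obtain ⟨⟨a, b, c⟩, rfl⟩ := ofAdd.surjective p
  rw [zpowersHom₃_apply] at hp
  have hb : b = 0 := by
    have hright := congrArg (rightHom.comp toSemidirect) hp
    simp only [MonoidHom.comp_apply, map_mul, map_zpow, map_pow, map_one, toSemidirect, lift_g,
      lift_h, lift_f, rightHom_inl, rightHom_inr, one_zpow, one_mul, mul_one] at hright
    simpa using congrArg toAdd hright
  subst hb
  rw [zpow_zero, one_mul] at hp
  have hleft := congrArg toSemidirect hp
  rw [map_mul, map_zpow, map_zpow, map_one, toSemidirect, lift_g, lift_f, ← map_zpow inl,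
    ← map_zpow inl, ← map_mul, map_eq_one_iff _ inl_injective] at hleft
  obtain ⟨rfl, rfl⟩ : a = 0 ∧ c = 0 := by simpa [Prod.ext_iff] using congrArg toAdd hleft
  rfl

end KleinST

/-- In `Γ = ⟨g, h, f | h g h⁻¹ = g⁻¹, h f h⁻¹ = f⁻¹, g f = f g⟩` the subgroup generated by
`{g, h ^ 2, f}` is isomorphic to `ℤ × ℤ × ℤ` (the free abelian group of rank 3). -/
theorem kleinST_closure_isomorphic_Z3 :
    Nonempty ((Subgroup.closure {KleinST.g, KleinST.h ^ 2, KleinST.f} : Subgroup KleinST) ≃*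
      Multiplicative (ℤ × ℤ × ℤ)) :=
  ⟨(MulEquiv.subgroupCongr (range_zpowersHom₃ _ _ _).symm).trans
    (MonoidHom.ofInjective KleinST.injective_zpowersHom₃).symm⟩
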